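/- Let A be an n-dimensional nil evolution algebra over a field F of characteristic ≠ 2 with natural basis e_1, …, e_n. Then A is fourth power-associative (i.e. x²·x² = (x²·x)·x for all x ∈ A) if and only if: (1) (e_i·e_i)·(e_j·e_j) = 0 for all 1 ≤ i ≤ j ≤ n; and (2) ((e_i·e_i)·e_j)·e_k = 0 for all 1 ≤ i, j, k ≤ n. -/

import Mathlib

/-- Principal powers: `ppow m a k = a^(k+1)`. -/
def ppow {F A : Type*} [Field F] [AddCommGroup A] [Module F A]
    (m : A →ₗ[F] A →ₗ[F] A) (a : A) : ℕ → A
  | 0 => a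
  | k + 1 => m (ppow m a k) a

/-!
Write `e i · e i = ∑ j, ω i j • e j`, so that `((e p · e p) · e a) · e b = ω p a ω a b • e b · e b`.
Nilpotency of `e i` forces `ω i i • e i · e i = 0`, and nilpotency of `e i + e j` forces
`ω i j ω j i • e i · e i = 0`: otherwise all principal powers of `e i + e j` lie in the plane
spanned by `e i · e i` and `e j · e j` with both coefficients nonzero. Hence
`((e p · e p) · e a) · e b = 0` whenever two of `p, a, b` coincide.

Fourth power-associativity at `e i` and at `e i + e j` then reduces to
`2 (e i · e i) · (e j · e j) = 0`, so `x² · x² = 0`, and therefore `(x² · x) · x = 0`, for every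
`x`. Adding the latter at `e i + e j + e k` and `e i - e j - e k` isolates
`ω i j ω j k • e k · e k + ω i k ω k j • e j · e j = 0`; multiplying by `ω j k` removes the second
term by the relation for `j, k`, and what is left is `ω i j ω j k ² • e k · e k = 0`.
The converse is a direct expansion in the basis.
-/

namespace EvolutionAlgebra

variable {F A ι : Type*} [Field F] [AddCommGroup A] [Module F A]
variable (m : A →ₗ[F] A →ₗ[F] A) (e : Module.Basis ι F A)

noncomputable def structConst (i j : ι) : F := e.repr (m (e i) (e i)) j

theorem mul_basis_eq_repr_smul (hnat : Pairwise fun i j => m (e i) (e j) = 0) (y : A) (j : ι) :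
    m y (e j) = e.repr y j • m (e j) (e j) := by
  classical
  have : m.flip (e j) = (e.coord j).smulRight (m (e j) (e j)) := by
    refine e.ext fun i => ?_
    rcases eq_or_ne i j with rfl | hij
    · simp
    · simp [hnat hij, hij]
  exact LinearMap.congr_fun this y

theorem sq_mul_basis (hnat : Pairwise fun i j => m (e i) (e j) = 0) (i j : ι) :
    m (m (e i) (e i)) (e j) = structConst m e i j • m (e j) (e j) :=
  mul_basis_eq_repr_smul m e hnat _ j

theorem sq_mul_basis_mul_basis (hnat : Pairwise fun i j => m (e i) (e j) = 0) (p a b : ι) :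
    m (m (m (e p) (e p)) (e a)) (e b) =
      (structConst m e p a * structConst m e a b) • m (e b) (e b) := by
  rw [sq_mul_basis m e hnat, map_smul, LinearMap.smul_apply, sq_mul_basis m e hnat, smul_smul]

theorem ppow_basis_succ (hnat : Pairwise fun i j => m (e i) (e j) = 0) (i : ι) (k : ℕ) :
    ppow m (e i) (k + 1) = structConst m e i i ^ k • m (e i) (e i) := by
  induction k with
  | zero => simp [ppow]
  | succ k ih =>
    rw [ppow, ih, map_smul, LinearMap.smul_apply, sq_mul_basis m e hnat, smul_smul, pow_succ]

theorem structConst_self_smul_sq_eq_zero (hnat : Pairwise fun i j => m (e i) (e j) = 0) {i : ι}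
    (hnil : ∃ k, ppow m (e i) k = 0) : structConst m e i i • m (e i) (e i) = 0 := by
  obtain ⟨k, hk⟩ := hnil
  cases k with
  | zero => exact absurd hk (e.ne_zero i)
  | succ k =>
    rw [ppow_basis_succ m e hnat] at hk
    rcases smul_eq_zero.mp hk with h | h
    · rw [pow_eq_zero_iff'.mp h |>.1, zero_smul]
    · rw [h, smul_zero]

theorem structConst_self_mul_eq_zero (hnat : Pairwise fun i j => m (e i) (e j) = 0) {i : ι}
    (hnil : ∃ k, ppow m (e i) k = 0) (j : ι) : structConst m e i i * structConst m e i j = 0 := by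
  rcases smul_eq_zero.mp (structConst_self_smul_sq_eq_zero m e hnat hnil) with h | h
  · rw [h, zero_mul]
  · simp [structConst, h]

theorem exists_ppow_succ_eq_smul_add_smul {x U V : A} {b c : F} (hb : b ≠ 0) (hc : c ≠ 0)
    (hx : m x x = U + V) (hU : m U x = c • V) (hV : m V x = b • U) (k : ℕ) :
    ∃ p q : F, p ≠ 0 ∧ q ≠ 0 ∧ ppow m x (k + 1) = p • U + q • V := by
  induction k with
  | zero => exact ⟨1, 1, one_ne_zero, one_ne_zero, by simp [ppow, hx]⟩
  | succ k ih =>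
    obtain ⟨p, q, hp, hq, hk⟩ := ih
    refine ⟨q * b, p * c, mul_ne_zero hq hb, mul_ne_zero hp hc, ?_⟩
    rw [ppow, hk, map_add, map_smul, map_smul, LinearMap.add_apply, LinearMap.smul_apply,
      LinearMap.smul_apply, hU, hV]
    module

theorem structConst_mul_structConst_smul_sq_eq_zero
    (hnat : Pairwise fun i j => m (e i) (e j) = 0) (hnil : ∀ a : A, ∃ k, ppow m a k = 0)
    {i j : ι} (hij : i ≠ j) :
    (structConst m e i j * structConst m e j i) • m (e i) (e i) = 0 := by
  classical
  by_contra h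
  obtain ⟨hω, hU⟩ := smul_ne_zero_iff.mp h
  obtain ⟨hc, hb⟩ := mul_ne_zero_iff.mp hω
  have hV : m (e j) (e j) ≠ 0 := fun hV => hb (by simp [structConst, hV])
  have hii : structConst m e i i = 0 :=
    (smul_eq_zero.mp (structConst_self_smul_sq_eq_zero m e hnat (hnil _))).resolve_right hU
  have hjj : structConst m e j j = 0 :=
    (smul_eq_zero.mp (structConst_self_smul_sq_eq_zero m e hnat (hnil _))).resolve_right hV
  have hx : m (e i + e j) (e i + e j) = m (e i) (e i) + m (e j) (e j) := by
    simp [hnat hij, hnat hij.symm]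
  have hUx : m (m (e i) (e i)) (e i + e j) = structConst m e i j • m (e j) (e j) := by
    simp [sq_mul_basis m e hnat, hii]
  have hVx : m (m (e j) (e j)) (e i + e j) = structConst m e j i • m (e i) (e i) := by
    simp [sq_mul_basis m e hnat, hjj]
  -- every principal power of `e i + e j` has a nonzero `i`-th coordinate
  obtain ⟨k, hk⟩ := hnil (e i + e j)
  cases k with
  | zero => simpa [ppow, hij.symm] using congrArg (fun z => e.repr z i) hk
  | succ k =>
    obtain ⟨p, q, -, hq, hpq⟩ := exists_ppow_succ_eq_smul_add_smul m hb hc hx hUx hVx k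
    have hcoord := congrArg (fun z => e.repr z i) (hpq.symm.trans hk)
    simp only [map_add, map_smul, Finsupp.add_apply, Finsupp.smul_apply, smul_eq_mul,
      map_zero, Finsupp.coe_zero, Pi.zero_apply] at hcoord
    change p * structConst m e i i + q * structConst m e j i = 0 at hcoord
    rw [hii, mul_zero, zero_add] at hcoord
    exact mul_ne_zero hq hb hcoord

theorem sq_mul_basis_mul_basis_eq_zero (hnat : Pairwise fun i j => m (e i) (e j) = 0)
    (hnil : ∀ a : A, ∃ k, ppow m a k = 0) {p a b : ι} (h : p = a ∨ a = b ∨ b = p) :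
    m (m (m (e p) (e p)) (e a)) (e b) = 0 := by
  rw [sq_mul_basis_mul_basis m e hnat]
  rcases h with rfl | rfl | rfl
  · rw [structConst_self_mul_eq_zero m e hnat (hnil _), zero_smul]
  · rw [mul_smul, structConst_self_smul_sq_eq_zero m e hnat (hnil _), smul_zero]
  · rcases eq_or_ne a b with rfl | hab
    · rw [structConst_self_mul_eq_zero m e hnat (hnil _), zero_smul]
    · exact structConst_mul_structConst_smul_sq_eq_zero m e hnat hnil hab.symm

theorem sq_mul_sq_eq_zero (h2 : (2 : F) ≠ 0) (hcomm : ∀ x y : A, m x y = m y x)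
    (hnat : Pairwise fun i j => m (e i) (e j) = 0) (hnil : ∀ a : A, ∃ k, ppow m a k = 0)
    (h4pa : ∀ x : A, m (m x x) (m x x) = m (m (m x x) x) x) (i j : ι) :
    m (m (e i) (e i)) (m (e j) (e j)) = 0 := by
  have hdiag : ∀ i, m (m (e i) (e i)) (m (e i) (e i)) = 0 := fun i =>
    (h4pa (e i)).trans (sq_mul_basis_mul_basis_eq_zero m e hnat hnil (Or.inl rfl))
  rcases eq_or_ne i j with rfl | hij
  · exact hdiag i
  have h := h4pa (e i + e j)
  simp only [map_add, LinearMap.add_apply, hnat hij, hnat hij.symm, add_zero, zero_add,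
    hdiag, hcomm (m (e j) (e j)) (m (e i) (e i)),
    sq_mul_basis_mul_basis_eq_zero m e hnat hnil, true_or, or_true] at h
  rw [← two_smul F] at h
  exact (smul_eq_zero.mp h).resolve_left h2

theorem sq_mul_basis_mul_basis_eq_zero_of_cube (h2 : (2 : F) ≠ 0)
    (hnat : Pairwise fun i j => m (e i) (e j) = 0) (hnil : ∀ a : A, ∃ k, ppow m a k = 0)
    (hcube : ∀ x : A, m (m (m x x) x) x = 0) (i j k : ι) :
    m (m (m (e i) (e i)) (e j)) (e k) = 0 := by
  by_cases hdeg : i = j ∨ j = k ∨ k = i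
  · exact sq_mul_basis_mul_basis_eq_zero m e hnat hnil hdeg
  push Not at hdeg
  obtain ⟨hij, hjk, hki⟩ := hdeg
  have hplus := hcube (e i + e j + e k)
  have hminus := hcube (e i - e j - e k)
  simp only [map_add, map_sub, LinearMap.add_apply, LinearMap.sub_apply, hnat hij, hnat hjk,
    hnat hki, hnat hij.symm, hnat hjk.symm, hnat hki.symm, add_zero, zero_add, sub_zero,
    zero_sub, sub_neg_eq_add, sq_mul_basis_mul_basis_eq_zero m e hnat hnil, true_or, or_true]
    at hplus hminus
  have hpair : (2 : F) • (m (m (m (e i) (e i)) (e j)) (e k) +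
      m (m (m (e i) (e i)) (e k)) (e j)) = 0 := by
    linear_combination (norm := module) hplus + hminus
  have hcycle := structConst_mul_structConst_smul_sq_eq_zero m e hnat hnil hjk
  simp only [sq_mul_basis_mul_basis m e hnat] at hpair ⊢
  rcases eq_or_ne (structConst m e j k) 0 with h0 | h0
  · rw [h0, mul_zero, zero_smul]
  · have h : (2 * structConst m e j k) • (structConst m e i j * structConst m e j k) •
        m (e k) (e k) = 0 := by
      linear_combination (norm := module) structConst m e j k • hpair
        - (2 * structConst m e i k) • hcycle
    exact (smul_eq_zero.mp h).resolve_left (mul_ne_zero h2 h0)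

section Finite

variable [Fintype ι]

theorem mul_self_eq_sum (hnat : Pairwise fun i j => m (e i) (e j) = 0) (x : A) :
    m x x = ∑ i, (e.repr x i * e.repr x i) • m (e i) (e i) := by
  conv_lhs => rw [← e.sum_repr x]
  simp only [map_sum, LinearMap.sum_apply, map_smul, LinearMap.smul_apply]
  refine Finset.sum_congr rfl fun i _ => ?_
  rw [Finset.sum_eq_single i (fun j _ hji => by rw [hnat hji, smul_zero]) (by simp), smul_smul]

theorem mul_self_mul_mul_self_eq_zero (hnat : Pairwise fun i j => m (e i) (e j) = 0)
    (h : ∀ i j, m (m (e i) (e i)) (m (e j) (e j)) = 0) (x : A) :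
    m (m x x) (m x x) = 0 := by
  simp [mul_self_eq_sum m e hnat x, map_sum, h]

theorem mul_self_mul_mul_eq_zero (hnat : Pairwise fun i j => m (e i) (e j) = 0)
    (h : ∀ i j k, m (m (m (e i) (e i)) (e j)) (e k) = 0) (x : A) :
    m (m (m x x) x) x = 0 := by
  have h' : ∀ i y z, m (m (m (e i) (e i)) y) z = 0 := fun i y z => by
    rw [← e.sum_repr y, ← e.sum_repr z]
    simp only [map_sum, LinearMap.sum_apply, map_smul, LinearMap.smul_apply, h, smul_zero,
      Finset.sum_const_zero]
  simp [mul_self_eq_sum m e hnat x, h']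

end Finite

end EvolutionAlgebra

open EvolutionAlgebra

/-- a nil evolution algebra over a field of characteristic ≠ 2 is fourth
power-associative iff `(eᵢ·eᵢ)·(eⱼ·eⱼ) = 0` for all `i ≤ j` and
`((eᵢ·eᵢ)·eⱼ)·e_k = 0` for all `i, j, k`. -/
theorem nil_evolution_algebra_fourth_power_associative_iff
    (F : Type*) [Field F] (h2 : (2 : F) ≠ 0)
    (A : Type*) [AddCommGroup A] [Module F A]
    (m : A →ₗ[F] A →ₗ[F] A) (hcomm : ∀ x y : A, m x y = m y x)
    (n : ℕ) (e : Module.Basis (Fin n) F A)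
    (hnat : ∀ i j : Fin n, i ≠ j → m (e i) (e j) = 0)
    (hnil : ∀ a : A, ∃ k : ℕ, ppow m a k = 0) :
    (∀ x : A, m (m x x) (m x x) = m (m (m x x) x) x) ↔
      ((∀ i j : Fin n, i ≤ j → m (m (e i) (e i)) (m (e j) (e j)) = 0) ∧
       (∀ i j k : Fin n, m (m (m (e i) (e i)) (e j)) (e k) = 0)) := by
  constructor
  · intro h4pa
    have hsq := sq_mul_sq_eq_zero m e h2 hcomm hnat hnil h4pa
    have hcube x : m (m (m x x) x) x = 0 :=
      (h4pa x).symm.trans (mul_self_mul_mul_self_eq_zero m e hnat hsq x)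
    exact ⟨fun i j _ => hsq i j, sq_mul_basis_mul_basis_eq_zero_of_cube m e h2 hnat hnil hcube⟩
  · rintro ⟨hsq_le, hcube⟩ x
    have hsq i j : m (m (e i) (e i)) (m (e j) (e j)) = 0 := by
      rcases le_total i j with hij | hji
      · exact hsq_le i j hij
      · rw [hcomm]; exact hsq_le j i hji
    rw [mul_self_mul_mul_self_eq_zero m e hnat hsq, mul_self_mul_mul_eq_zero m e hnat hcube]
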